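/- arXiv:2511.09647 — 2 statements merged into one kernel-verified Lean document; each statement's English description precedes it below -/
import Mathlib

section
/- Let T be a linear operator and P an orthogonal projector on a finite-dimensional Hilbert space such that TP = PT = P, and suppose ‖(T^r − P)ψ‖ ≤ μ^r ‖ψ‖ for all vectors ψ and all r ≥ 1, with 0 < μ < 1. Then for any unit vector ψ₀ with ‖Pψ₀‖ = c > 0 and any r satisfying μ^r ≤ ε·c, the normalized vector ψ_out = T^r ψ₀ / ‖T^r ψ₀‖ satisfies ‖P ψ_out‖ ≥ 1 − ε. -/
/-!
Since `P T = P`, the vector `v = T^r ψ₀` satisfies `P v = P ψ₀`, while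
`‖v - P ψ₀‖ ≤ μ^r ≤ ε c`. Hence `‖v‖ ≤ (1 + ε) c`, and normalizing `v` leaves
`‖P v‖ / ‖v‖ ≥ 1 / (1 + ε) ≥ 1 - ε`.
-/

theorem mul_pow_eq_self_of_mul_eq_self {M : Type*} [Monoid M] {a b : M} (h : a * b = a) :
    ∀ n : ℕ, a * b ^ n = a
  | 0 => by rw [pow_zero, mul_one]
  | n + 1 => by rw [pow_succ, ← mul_assoc, mul_pow_eq_self_of_mul_eq_self h n, h]

theorem one_sub_le_norm_apply_inv_norm_smul {E : Type*} [NormedAddCommGroup E]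
    [NormedSpace ℂ E] (P : E →L[ℂ] E) {v w : E} {ε : ℝ} (hPv : P v = P w) (hPw : P w ≠ 0)
    (hε : 0 ≤ ε) (hdev : ‖v - P w‖ ≤ ε * ‖P w‖) :
    1 - ε ≤ ‖P (‖v‖⁻¹ • v)‖ := by
  have hv : ‖v‖ ≤ ‖P w‖ * (1 + ε) := by
    linarith [norm_le_insert' v (P w)]
  have hv0 : 0 < ‖v‖ := norm_pos_iff.2 fun h => hPw (by rw [← hPv, h, map_zero])
  have hc : 0 < ‖P w‖ := norm_pos_iff.2 hPw
  rw [P.map_smul_of_tower, norm_smul, hPv, norm_inv, norm_norm, inv_mul_eq_div,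
    le_div_iff₀ hv0]
  rcases le_total ε 1 with hε1 | hε1
  · nlinarith [mul_le_mul_of_nonneg_left hv (sub_nonneg.2 hε1),
      mul_nonneg (mul_nonneg hε hε) hc.le]
  · nlinarith

theorem stmt_4_general {H : Type*} [NormedAddCommGroup H] [InnerProductSpace ℂ H]
    (T P : H →L[ℂ] H)
    (hPT : P.comp T = P)
    (μ : ℝ)
    (hconv : ∀ (ψ : H) (r : ℕ), 1 ≤ r → ‖(T ^ r - P) ψ‖ ≤ μ ^ r * ‖ψ‖)
    (ψ₀ : H) (hψ₀ : ‖ψ₀‖ = 1) (c ε : ℝ) (hc : ‖P ψ₀‖ = c) (hc0 : 0 < c)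
    (r : ℕ) (hr : 1 ≤ r) (hrε : μ ^ r ≤ ε * c) :
    ‖P ((‖(T ^ r) ψ₀‖)⁻¹ • (T ^ r) ψ₀)‖ ≥ 1 - ε := by
  have hPv : P ((T ^ r) ψ₀) = P ψ₀ :=
    congr($(mul_pow_eq_self_of_mul_eq_self hPT r) ψ₀)
  have hdev : ‖(T ^ r) ψ₀ - P ψ₀‖ ≤ ε * c := by
    have hψ₀_conv := hconv ψ₀ r hr
    rw [hψ₀, mul_one, sub_apply] at hψ₀_conv
    exact hψ₀_conv.trans hrε
  have hε : 0 ≤ ε := nonneg_of_mul_nonneg_left ((norm_nonneg _).trans hdev) hc0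
  rw [← hc] at hdev hc0
  exact one_sub_le_norm_apply_inv_norm_smul P hPv (norm_pos_iff.1 hc0) hε hdev

/-- If `T P = P T = P`, `‖(T^r - P)ψ‖ ≤ μ^r ‖ψ‖` for all `ψ` and `r ≥ 1` with `0 < μ < 1`,
then for a unit vector `ψ₀` with `‖P ψ₀‖ = c > 0` and `r` with `μ^r ≤ ε·c`, the normalized
vector `ψ_out = T^r ψ₀ / ‖T^r ψ₀‖` satisfies `‖P ψ_out‖ ≥ 1 - ε`. -/
theorem stmt_4 {H : Type*} [NormedAddCommGroup H] [InnerProductSpace ℂ H]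
    [FiniteDimensional ℂ H] (T P : H →L[ℂ] H)
    (hPsym : ∀ x y : H, inner ℂ (P x) y = inner x (P y : H) (𝕜 := ℂ))
    (hPidem : P.comp P = P)
    (hTP : T.comp P = P) (hPT : P.comp T = P)
    (μ : ℝ) (hμ0 : 0 < μ) (hμ1 : μ < 1)
    (hconv : ∀ (ψ : H) (r : ℕ), 1 ≤ r → ‖(T ^ r - P) ψ‖ ≤ μ ^ r * ‖ψ‖)
    (ψ₀ : H) (hψ₀ : ‖ψ₀‖ = 1) (c ε : ℝ) (hc : ‖P ψ₀‖ = c) (hc0 : 0 < c)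
    (r : ℕ) (hr : 1 ≤ r) (hrε : μ ^ r ≤ ε * c) :
    ‖P ((‖(T ^ r) ψ₀‖)⁻¹ • (T ^ r) ψ₀)‖ ≥ 1 - ε :=
  stmt_4_general T P hPT μ hconv ψ₀ hψ₀ c ε hc hc0 r hr hrε
end

section
/- Let ψ = ∑_{x∈S} α_x Θ_x + ∑_{x∉S} α_x Θ_x be a unit vector (where Θ_x are vectors with Gram matrix ⟨Θ_x|Θ_y⟩ = ⟨x|M^{⊗n}|y⟩ for M = [[1, cos θ],[cos θ,1]]) that is orthogonal to Θ_s for every s ∈ S. Then ∑_{x∉S} |α_x|² ≥ (1 + cos θ)^{−n}. -/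
/-!
Put `β_x = ⟪Θ_x, ψ⟫`. Expanding `‖ψ‖² = ∑_x conj(α_x) β_x` and using `β_s = 0` on `S`,
Cauchy–Schwarz gives `1 ≤ (∑_{x∉S} |α_x|²) · ∑_x |β_x|²`. The Gram matrix `cos θ ^ d(x, y)` has
nonnegative entries and all row sums equal to `(1 + cos θ)^n`, so by the Schur test its largest
eigenvalue is at most `(1 + cos θ)^n`; this bounds `∑_x |β_x|²` by `(1 + cos θ)^n ‖ψ‖²`.
-/

open Finset

open scoped InnerProductSpace

theorem sum_pow_hammingDist {ι R : Type*} [Fintype ι] [DecidableEq ι] [CommSemiring R] (c : R)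
    (x : ι → Bool) :
    ∑ y : ι → Bool, c ^ hammingDist x y = (1 + c) ^ Fintype.card ι := by
  have hprod : ∀ y : ι → Bool, c ^ hammingDist x y = ∏ i, if x i = y i then 1 else c := by
    intro y
    rw [prod_ite, prod_const_one, prod_const, one_mul, hammingDist]
  have hfactor : ∀ i, (∑ b : Bool, if x i = b then (1 : R) else c) = 1 + c := by
    intro i
    cases x i <;> simp [add_comm]
  simp_rw [hprod, ← Fintype.prod_sum fun i b => if x i = b then (1 : R) else c, hfactor,
    prod_const, card_univ]

section Schur

variable {ι : Type*} [Fintype ι] {K : ι → ι → ℝ} {L : ℝ}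

theorem sum_sum_mul_mul_le_of_sum_le (hK : ∀ x y, 0 ≤ K x y) (hrow : ∀ x, ∑ y, K x y ≤ L)
    (hcol : ∀ y, ∑ x, K x y ≤ L) (a : ι → ℝ) :
    ∑ x, ∑ y, a x * a y * K x y ≤ L * ∑ x, a x ^ 2 := by
  calc ∑ x, ∑ y, a x * a y * K x y
      ≤ ∑ x, ∑ y, (a x ^ 2 * K x y + a y ^ 2 * K x y) / 2 := by
        gcongr with x _ y _
        nlinarith [mul_nonneg (sq_nonneg (a x - a y)) (hK x y)]
    _ = (∑ x, a x ^ 2 * ∑ y, K x y + ∑ y, a y ^ 2 * ∑ x, K x y) / 2 := by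
        simp only [← sum_div, sum_add_distrib, mul_sum]
        rw [sum_comm (f := fun x y => a y ^ 2 * K x y)]
    _ ≤ (∑ x, a x ^ 2 * L + ∑ y, a y ^ 2 * L) / 2 := by
        gcongr with x _ y _
        · exact hrow x
        · exact hcol y
    _ = L * ∑ x, a x ^ 2 := by rw [← sum_mul]; ring

variable {𝕜 E : Type*} [RCLike 𝕜] [NormedAddCommGroup E] [InnerProductSpace 𝕜 E] {v : ι → E}

theorem norm_sum_smul_sq_le_of_sum_le (hK : ∀ x y, ‖⟪v x, v y⟫_𝕜‖ ≤ K x y)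
    (hrow : ∀ x, ∑ y, K x y ≤ L) (hcol : ∀ y, ∑ x, K x y ≤ L) (β : ι → 𝕜) :
    ‖∑ x, β x • v x‖ ^ 2 ≤ L * ∑ x, ‖β x‖ ^ 2 := by
  have hexpand : ⟪∑ x, β x • v x, ∑ y, β y • v y⟫_𝕜 =
      ∑ x, ∑ y, (starRingEnd 𝕜) (β x) * β y * ⟪v x, v y⟫_𝕜 := by
    simp_rw [sum_inner, inner_smul_left, inner_sum, inner_smul_right, mul_sum, mul_assoc]
  calc ‖∑ x, β x • v x‖ ^ 2 = RCLike.re ⟪∑ x, β x • v x, ∑ y, β y • v y⟫_𝕜 :=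
        (inner_self_eq_norm_sq _).symm
    _ ≤ ‖∑ x, ∑ y, (starRingEnd 𝕜) (β x) * β y * ⟪v x, v y⟫_𝕜‖ :=
        hexpand ▸ RCLike.re_le_norm _
    _ ≤ ∑ x, ∑ y, ‖β x‖ * ‖β y‖ * K x y := by
        refine (norm_sum_le _ _).trans (sum_le_sum fun x _ => (norm_sum_le _ _).trans ?_)
        gcongr with y _
        rw [norm_mul, norm_mul, RCLike.norm_conj]
        gcongr
        exact hK x y
    _ ≤ L * ∑ x, ‖β x‖ ^ 2 :=
        sum_sum_mul_mul_le_of_sum_le (fun x y => (norm_nonneg _).trans (hK x y)) hrow hcol _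

theorem sum_norm_inner_sq_le_of_sum_le (hK : ∀ x y, ‖⟪v x, v y⟫_𝕜‖ ≤ K x y)
    (hrow : ∀ x, ∑ y, K x y ≤ L) (hcol : ∀ y, ∑ x, K x y ≤ L) (hL : 0 ≤ L) (ψ : E) :
    ∑ x, ‖⟪v x, ψ⟫_𝕜‖ ^ 2 ≤ L * ‖ψ‖ ^ 2 := by
  set B := ∑ x, ‖⟪v x, ψ⟫_𝕜‖ ^ 2
  set φ := ∑ x, ⟪v x, ψ⟫_𝕜 • v x
  have hB : (B : 𝕜) = ⟪ψ, φ⟫_𝕜 := by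
    simp only [B, φ, inner_sum, inner_smul_right, ← inner_conj_symm ψ (v _), RCLike.mul_conj]
    push_cast
    rfl
  have hBφ : B ≤ ‖ψ‖ * ‖φ‖ := by
    simpa [← hB] using (RCLike.re_le_norm (⟪ψ, φ⟫_𝕜)).trans (norm_inner_le_norm ψ φ)
  have hφ : ‖φ‖ ^ 2 ≤ L * B := norm_sum_smul_sq_le_of_sum_le hK hrow hcol _
  have hB0 : 0 ≤ B := sum_nonneg fun x _ => sq_nonneg _
  have hsq : B * B ≤ (L * ‖ψ‖ ^ 2) * B := by
    nlinarith [mul_le_mul hBφ hBφ hB0 (by positivity), sq_nonneg ‖ψ‖]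
  rcases hB0.eq_or_lt with hzero | hpos
  · rw [← hzero]
    positivity
  · exact le_of_mul_le_mul_right hsq hpos

end Schur

theorem norm_sq_le_sum_compl_mul {ι 𝕜 E : Type*} [Fintype ι] [DecidableEq ι] [RCLike 𝕜]
    [NormedAddCommGroup E] [InnerProductSpace 𝕜 E] {v : ι → E} {α : ι → 𝕜} {S : Finset ι}
    (horth : ∀ s ∈ S, ⟪v s, ∑ x, α x • v x⟫_𝕜 = 0) :
    ‖∑ x, α x • v x‖ ^ 2 ≤ ∑ x ∈ Sᶜ, ‖α x‖ * ‖⟪v x, ∑ x, α x • v x⟫_𝕜‖ := by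
  set ψ := ∑ x, α x • v x
  have hexpand : ⟪ψ, ψ⟫_𝕜 = ∑ x ∈ Sᶜ, (starRingEnd 𝕜) (α x) * ⟪v x, ψ⟫_𝕜 := by
    conv_lhs => rw [show ψ = ∑ x, α x • v x from rfl, sum_inner]
    rw [← sum_add_sum_compl S,
      sum_eq_zero fun s hs => by rw [inner_smul_left, horth s hs, mul_zero], zero_add]
    simp only [inner_smul_left]
    rfl
  calc ‖ψ‖ ^ 2 = RCLike.re ⟪ψ, ψ⟫_𝕜 := (inner_self_eq_norm_sq _).symm
    _ ≤ ‖∑ x ∈ Sᶜ, (starRingEnd 𝕜) (α x) * ⟪v x, ψ⟫_𝕜‖ := hexpand ▸ RCLike.re_le_norm _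
    _ ≤ ∑ x ∈ Sᶜ, ‖α x‖ * ‖⟪v x, ψ⟫_𝕜‖ := by
        refine (norm_sum_le _ _).trans_eq (sum_congr rfl fun x _ => ?_)
        rw [norm_mul, RCLike.norm_conj]

theorem stmt_19_general {H : Type*} [NormedAddCommGroup H] [InnerProductSpace ℂ H]
    (n : ℕ) (θ : ℝ) (hθ : θ ∈ Set.Ioo 0 (Real.pi / 2))
    (Θ : (Fin n → Bool) → H)
    (hGram : ∀ x y : Fin n → Bool,
      (inner ℂ (Θ x) (Θ y) : ℂ) = (Real.cos θ ^ hammingDist x y : ℝ))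
    (S : Finset (Fin n → Bool)) (α : (Fin n → Bool) → ℂ)
    (ψ : H) (hψ : ψ = ∑ x : Fin n → Bool, α x • Θ x)
    (hunit : ‖ψ‖ = 1)
    (horth : ∀ s ∈ S, (inner ℂ (Θ s) ψ : ℂ) = 0) :
    ∑ x ∈ Sᶜ, ‖α x‖ ^ 2 ≥ ((1 + Real.cos θ) ^ n)⁻¹ := by
  subst hψ
  have hcos : 0 ≤ Real.cos θ :=
    Real.cos_nonneg_of_mem_Icc ⟨by linarith [hθ.1, Real.pi_pos], hθ.2.le⟩
  have hK : ∀ x y : Fin n → Bool, ‖⟪Θ x, Θ y⟫_ℂ‖ ≤ Real.cos θ ^ hammingDist x y := by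
    intro x y
    rw [hGram, Complex.norm_real, Real.norm_of_nonneg (by positivity)]
  have hrow : ∀ x : Fin n → Bool, ∑ y, Real.cos θ ^ hammingDist x y ≤ (1 + Real.cos θ) ^ n := by
    intro x
    rw [sum_pow_hammingDist (Real.cos θ) x, Fintype.card_fin]
  have hcol : ∀ y : Fin n → Bool, ∑ x, Real.cos θ ^ hammingDist x y ≤ (1 + Real.cos θ) ^ n := by
    intro y
    simpa only [hammingDist_comm] using hrow y
  set β := fun x => ‖⟪Θ x, ∑ x, α x • Θ x⟫_ℂ‖
  have hbessel : ∑ x, β x ^ 2 ≤ (1 + Real.cos θ) ^ n := by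
    simpa [hunit] using sum_norm_inner_sq_le_of_sum_le hK hrow hcol (by positivity) (∑ x, α x • Θ x)
  have hcompl : 1 ≤ ∑ x ∈ Sᶜ, ‖α x‖ * β x := by
    simpa [hunit] using norm_sq_le_sum_compl_mul horth
  rw [ge_iff_le, inv_le_iff_one_le_mul₀ (by positivity)]
  calc 1 ≤ (∑ x ∈ Sᶜ, ‖α x‖ * β x) ^ 2 := one_le_pow₀ hcompl
    _ ≤ (∑ x ∈ Sᶜ, ‖α x‖ ^ 2) * ∑ x ∈ Sᶜ, β x ^ 2 := sum_mul_sq_le_sq_mul_sq _ _ _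
    _ ≤ (∑ x ∈ Sᶜ, ‖α x‖ ^ 2) * (1 + Real.cos θ) ^ n := by
        gcongr
        exact (sum_le_sum_of_subset_of_nonneg (subset_univ _) fun x _ _ => sq_nonneg _).trans
          hbessel

/-- Let `Θ_x` (for `x ∈ {0,1}^n`) be vectors with Gram matrix
`⟨Θ_x, Θ_y⟩ = ⟨x|M^{⊗n}|y⟩ = cos(θ)^{D(x,y)}` for `M = [[1, cos θ],[cos θ, 1]]`, and let
`ψ = ∑_x α_x Θ_x` be a unit vector orthogonal to `Θ_s` for every `s ∈ S`. Then
`∑_{x∉S} |α_x|² ≥ (1 + cos θ)^{-n}`. -/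
theorem stmt_19 {H : Type*} [NormedAddCommGroup H] [InnerProductSpace ℂ H]
    [FiniteDimensional ℂ H] (n : ℕ) (θ : ℝ) (hθ : θ ∈ Set.Ioo 0 (Real.pi / 2))
    (Θ : (Fin n → Bool) → H)
    (hGram : ∀ x y : Fin n → Bool,
      (inner ℂ (Θ x) (Θ y) : ℂ) = (Real.cos θ ^ hammingDist x y : ℝ))
    (S : Finset (Fin n → Bool)) (α : (Fin n → Bool) → ℂ)
    (ψ : H) (hψ : ψ = ∑ x : Fin n → Bool, α x • Θ x)
    (hunit : ‖ψ‖ = 1)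
    (horth : ∀ s ∈ S, (inner ℂ (Θ s) ψ : ℂ) = 0) :
    ∑ x ∈ Sᶜ, ‖α x‖ ^ 2 ≥ ((1 + Real.cos θ) ^ n)⁻¹ :=
  stmt_19_general n θ hθ Θ hGram S α ψ hψ hunit horth
end
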